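/- For the Heisenberg matrices a^T = [[1,0,-y/2],[0,1,x/2]] and z^T = [0,0,1], and any smooth f: ℝ³ → ℝ, the 'carré du champ' iteration commutes: Γ₁(f, Γ₁^z(f,f)) = Γ₁^z(f, Γ₁(f,f)), where Γ₁(f,g) = ⟨a^T∇f, a^T∇g⟩_{ℝ²} and Γ₁^z(f,g) = ⟨z^T∇f, z^T∇g⟩_ℝ. -/

import Mathlib

noncomputable def dX (f : ℝ × ℝ × ℝ → ℝ) (p : ℝ × ℝ × ℝ) : ℝ := fderiv ℝ f p (1, 0, 0)
noncomputable def dY (f : ℝ × ℝ × ℝ → ℝ) (p : ℝ × ℝ × ℝ) : ℝ := fderiv ℝ f p (0, 1, 0)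
noncomputable def dZ (f : ℝ × ℝ × ℝ → ℝ) (p : ℝ × ℝ × ℝ) : ℝ := fderiv ℝ f p (0, 0, 1)

/-- First horizontal Heisenberg derivative: (aᵀ∇)₁ f = f_x - (y/2) f_z. -/
noncomputable def aGrad1 (f : ℝ × ℝ × ℝ → ℝ) (p : ℝ × ℝ × ℝ) : ℝ :=
  dX f p - (p.2.1 / 2) * dZ f p
/-- Second horizontal Heisenberg derivative: (aᵀ∇)₂ f = f_y + (x/2) f_z. -/
noncomputable def aGrad2 (f : ℝ × ℝ × ℝ → ℝ) (p : ℝ × ℝ × ℝ) : ℝ :=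
  dY f p + (p.1 / 2) * dZ f p

/-- Γ₁(f,g) = ⟨aᵀ∇f, aᵀ∇g⟩. -/
noncomputable def Gamma1 (f g : ℝ × ℝ × ℝ → ℝ) (p : ℝ × ℝ × ℝ) : ℝ :=
  aGrad1 f p * aGrad1 g p + aGrad2 f p * aGrad2 g p

/-- Γ₁^z(f,g) = ⟨zᵀ∇f, zᵀ∇g⟩ with zᵀ = (0,0,1). -/
noncomputable def Gamma1z (f g : ℝ × ℝ × ℝ → ℝ) (p : ℝ × ℝ × ℝ) : ℝ :=
  dZ f p * dZ g p

/- auxiliary material -/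
noncomputable def D2 (f : ℝ × ℝ × ℝ → ℝ) (p u v : ℝ × ℝ × ℝ) : ℝ :=
  fderiv ℝ (fderiv ℝ f) p u v

section aux
variable {f : ℝ × ℝ × ℝ → ℝ} (hf : ContDiff ℝ (⊤ : ℕ∞) f)
include hf

lemma hd1 : Differentiable ℝ f := hf.differentiable (by simp)

lemma hd2 : Differentiable ℝ (fderiv ℝ f) :=
  (hf.fderiv_right (m := 1) (by exact WithTop.coe_le_coe.mpr le_top)).differentiable one_ne_zero

lemma hdv (v : ℝ × ℝ × ℝ) : Differentiable ℝ (fun q => fderiv ℝ f q v) :=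
  (hd2 hf).clm_apply (differentiable_const v)

lemma key (v : ℝ × ℝ × ℝ) (p u : ℝ × ℝ × ℝ) :
    fderiv ℝ (fun q => fderiv ℝ f q v) p u = D2 f p u v := by
  rw [fderiv_clm_apply ((hd2 hf) p) (differentiableAt_const v)]
  simp [D2]

lemma lsymm (p u v : ℝ × ℝ × ℝ) : D2 f p u v = D2 f p v u :=
  second_derivative_symmetric (fun y => ((hd1 hf) y).hasFDerivAt)
    (((hd2 hf) p).hasFDerivAt) u v

lemma hdZ : Differentiable ℝ (dZ f) := hdv hf _
lemma hdX : Differentiable ℝ (dX f) := hdv hf _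
lemma hdY : Differentiable ℝ (dY f) := hdv hf _

lemma fderiv_dZ (p u : ℝ × ℝ × ℝ) : fderiv ℝ (dZ f) p u = D2 f p u (0, 0, 1) :=
  key hf _ p u
lemma fderiv_dX (p u : ℝ × ℝ × ℝ) : fderiv ℝ (dX f) p u = D2 f p u (1, 0, 0) :=
  key hf _ p u
lemma fderiv_dY (p u : ℝ × ℝ × ℝ) : fderiv ℝ (dY f) p u = D2 f p u (0, 1, 0) :=
  key hf _ p u

noncomputable def L21 : (ℝ × ℝ × ℝ) →L[ℝ] ℝ :=
  (ContinuousLinearMap.fst ℝ ℝ ℝ).comp (ContinuousLinearMap.snd ℝ ℝ (ℝ × ℝ))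

noncomputable def L1 : (ℝ × ℝ × ℝ) →L[ℝ] ℝ := ContinuousLinearMap.fst ℝ ℝ (ℝ × ℝ)

omit hf in
lemma eqy : (fun q : ℝ × ℝ × ℝ => q.2.1 / 2) = fun q => ((2:ℝ)⁻¹ • L21) q := by
  funext q; simp [L21, div_eq_inv_mul, mul_comm]

omit hf in
lemma eqx : (fun q : ℝ × ℝ × ℝ => q.1 / 2) = fun q => ((2:ℝ)⁻¹ • L1) q := by
  funext q; simp [L1, div_eq_inv_mul, mul_comm]

omit hf in
lemma hcy : Differentiable ℝ (fun q : ℝ × ℝ × ℝ => q.2.1 / 2) := by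
  rw [eqy]; exact ((2:ℝ)⁻¹ • L21).differentiable

omit hf in
lemma hcx : Differentiable ℝ (fun q : ℝ × ℝ × ℝ => q.1 / 2) := by
  rw [eqx]; exact ((2:ℝ)⁻¹ • L1).differentiable

omit hf in
lemma fderiv_cy (p u : ℝ × ℝ × ℝ) :
    fderiv ℝ (fun q : ℝ × ℝ × ℝ => q.2.1 / 2) p u = u.2.1 / 2 := by
  rw [eqy, ((2:ℝ)⁻¹ • L21).fderiv]
  simp [L21, div_eq_inv_mul, mul_comm]

omit hf in
lemma fderiv_cx (p u : ℝ × ℝ × ℝ) :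
    fderiv ℝ (fun q : ℝ × ℝ × ℝ => q.1 / 2) p u = u.1 / 2 := by
  rw [eqx, ((2:ℝ)⁻¹ • L1).fderiv]
  simp [L1, div_eq_inv_mul, mul_comm]

lemma hA1 : Differentiable ℝ (aGrad1 f) := by
  have : aGrad1 f = fun q => dX f q - (q.2.1 / 2) * dZ f q := rfl
  rw [this]
  exact (hdX hf).sub ((hcy).mul (hdZ hf))

lemma hA2 : Differentiable ℝ (aGrad2 f) := by
  have : aGrad2 f = fun q => dY f q + (q.1 / 2) * dZ f q := rfl
  rw [this]
  exact (hdY hf).add ((hcx).mul (hdZ hf))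

lemma fderiv_A1 (p u : ℝ × ℝ × ℝ) :
    fderiv ℝ (aGrad1 f) p u =
      D2 f p u (1, 0, 0) - u.2.1 / 2 * dZ f p - p.2.1 / 2 * D2 f p u (0, 0, 1) := by
  have h : aGrad1 f = fun q => dX f q - (q.2.1 / 2) * dZ f q := rfl
  rw [h, fderiv_fun_sub ((hdX hf) p) ((hcy.fun_mul (hdZ hf)) p)]
  rw [ContinuousLinearMap.sub_apply, fderiv_fun_mul (hcy p) ((hdZ hf) p)]
  simp only [ContinuousLinearMap.add_apply, ContinuousLinearMap.smul_apply, smul_eq_mul]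
  rw [fderiv_dX hf, fderiv_dZ hf, fderiv_cy]
  ring

lemma fderiv_A2 (p u : ℝ × ℝ × ℝ) :
    fderiv ℝ (aGrad2 f) p u =
      D2 f p u (0, 1, 0) + u.1 / 2 * dZ f p + p.1 / 2 * D2 f p u (0, 0, 1) := by
  have h : aGrad2 f = fun q => dY f q + (q.1 / 2) * dZ f q := rfl
  rw [h, fderiv_fun_add ((hdY hf) p) ((hcx.fun_mul (hdZ hf)) p)]
  rw [ContinuousLinearMap.add_apply, fderiv_fun_mul (hcx p) ((hdZ hf) p)]
  simp only [ContinuousLinearMap.add_apply, ContinuousLinearMap.smul_apply, smul_eq_mul]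
  rw [fderiv_dY hf, fderiv_dZ hf, fderiv_cx]
  ring

lemma fderiv_g1 (p u : ℝ × ℝ × ℝ) :
    fderiv ℝ (fun q => dZ f q * dZ f q) p u = 2 * dZ f p * D2 f p u (0, 0, 1) := by
  rw [fderiv_fun_mul ((hdZ hf) p) ((hdZ hf) p)]
  simp only [ContinuousLinearMap.add_apply, ContinuousLinearMap.smul_apply, smul_eq_mul]
  rw [fderiv_dZ hf]
  ring

lemma fderiv_g2 (p u : ℝ × ℝ × ℝ) :
    fderiv ℝ (fun q => aGrad1 f q * aGrad1 f q + aGrad2 f q * aGrad2 f q) p u =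
      2 * aGrad1 f p * fderiv ℝ (aGrad1 f) p u +
      2 * aGrad2 f p * fderiv ℝ (aGrad2 f) p u := by
  rw [fderiv_fun_add (((hA1 hf).fun_mul (hA1 hf)) p) (((hA2 hf).fun_mul (hA2 hf)) p)]
  rw [ContinuousLinearMap.add_apply, fderiv_fun_mul ((hA1 hf) p) ((hA1 hf) p),
    fderiv_fun_mul ((hA2 hf) p) ((hA2 hf) p)]
  simp only [ContinuousLinearMap.add_apply, ContinuousLinearMap.smul_apply, smul_eq_mul]
  ring

end aux

theorem heisenberg_gamma_commutation (f : ℝ × ℝ × ℝ → ℝ) (hf : ContDiff ℝ (⊤ : ℕ∞) f)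
    (p : ℝ × ℝ × ℝ) :
    Gamma1 f (fun q => Gamma1z f f q) p = Gamma1z f (fun q => Gamma1 f f q) p := by
  have e1 := fderiv_g1 hf p (1,0,0)
  have e2 := fderiv_g1 hf p (0,1,0)
  have e3 := fderiv_g1 hf p (0,0,1)
  have e4 := fderiv_g2 hf p (0,0,1)
  have a1 := fderiv_A1 hf p (0,0,1)
  have a2 := fderiv_A2 hf p (0,0,1)
  have s1 := lsymm hf p (1,0,0) (0,0,1)
  have s2 := lsymm hf p (0,1,0) (0,0,1)
  simp only [Gamma1, Gamma1z, aGrad1, aGrad2, dX, dY, dZ] at e1 e2 e3 e4 a1 a2 ⊢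
  rw [e1, e2, e3, e4, a1, a2, s1, s2]
  ring
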